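/- arXiv:2501.00925 — 6 statements merged into one kernel-verified Lean document; each statement's English description precedes it below -/
import Mathlib

section
/- Pythagorean decomposition for the twisted squared distance: for unit vectors k, σ ∈ ℝ^d and x, y ∈ ℝ^d, define |y - x|²_{k,σ} := |x|² + |y|² - 2(P_{kσ}x)·y, where P_{kσ}(x) = (k·σ)x + (x·k)σ - (σ·x)k. Then |y - x|²_{k,σ} = |Π_{σ⊥}y - P_{kσ}Π_{k⊥}x|² + (|x|² - |P_{kσ}x|²) + (y·σ - x·k)², where Π_{k⊥}, Π_{σ⊥} are the orthogonal projections onto k^⊥ and σ^⊥. In particular |y-x|²_{k,σ} ≥ 0. -/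
open scoped RealInnerProductSpace

/-- The connection operator `P_{kσ}(x) = (k·σ)x + (x·k)σ - (σ·x)k`. -/
noncomputable def Pks {d : ℕ} (k σ x : EuclideanSpace ℝ (Fin d)) : EuclideanSpace ℝ (Fin d) :=
  ⟪k, σ⟫ • x + ⟪x, k⟫ • σ - ⟪σ, x⟫ • k

/-- **Pythagorean decomposition of the twisted squared distance.**
For unit vectors `k, σ` and `x, y ∈ ℝ^d`, the twisted squared distance
`|y-x|²_{k,σ} := |x|² + |y|² - 2(P_{kσ}x)·y` decomposes as
`|Π_{σ⊥}y - P_{kσ}Π_{k⊥}x|² + (|x|² - |P_{kσ}x|²) + (y·σ - x·k)²`;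
in particular it is nonnegative. -/
theorem twisted_distance_decomposition (d : ℕ) (k σ : EuclideanSpace ℝ (Fin d))
    (hk : ‖k‖ = 1) (hσ : ‖σ‖ = 1) (x y : EuclideanSpace ℝ (Fin d)) :
    ‖x‖ ^ 2 + ‖y‖ ^ 2 - 2 * ⟪Pks k σ x, y⟫
        = ‖(y - ⟪σ, y⟫ • σ) - Pks k σ (x - ⟪k, x⟫ • k)‖ ^ 2
          + (‖x‖ ^ 2 - ‖Pks k σ x‖ ^ 2) + (⟪y, σ⟫ - ⟪x, k⟫) ^ 2 ∧
    0 ≤ ‖x‖ ^ 2 + ‖y‖ ^ 2 - 2 * ⟪Pks k σ x, y⟫ := by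
  have hkk : ⟪k,k⟫ = 1 := by rw [real_inner_self_eq_norm_sq, hk]; norm_num
  have hss : ⟪σ,σ⟫ = 1 := by rw [real_inner_self_eq_norm_sq, hσ]; norm_num
  have heq : ‖x‖ ^ 2 + ‖y‖ ^ 2 - 2 * ⟪Pks k σ x, y⟫
      = ‖(y - ⟪σ, y⟫ • σ) - Pks k σ (x - ⟪k, x⟫ • k)‖ ^ 2
        + (‖x‖ ^ 2 - ‖Pks k σ x‖ ^ 2) + (⟪y, σ⟫ - ⟪x, k⟫) ^ 2 := by
    simp only [Pks, ← real_inner_self_eq_norm_sq, inner_sub_left, inner_sub_right,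
      inner_add_left, inner_add_right, real_inner_smul_left, real_inner_smul_right,
      hkk, hss, real_inner_comm x k, real_inner_comm x σ, real_inner_comm y k,
      real_inner_comm y σ, real_inner_comm σ k, real_inner_comm y x]
    ring
  refine ⟨heq, ?_⟩
  have hP : ‖Pks k σ x‖ ^ 2 ≤ ‖x‖ ^ 2 := by
    have hcs := real_inner_mul_inner_self_le (σ - ⟪k,σ⟫ • k) (x - ⟪k,x⟫ • k)
    simp only [Pks, ← real_inner_self_eq_norm_sq, inner_sub_left, inner_sub_right,
      inner_add_left, inner_add_right, real_inner_smul_left, real_inner_smul_right,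
      hkk, hss, real_inner_comm x k, real_inner_comm x σ,
      real_inner_comm σ k] at hcs ⊢
    nlinarith [hcs]
  rw [heq]
  nlinarith [sq_nonneg (⟪y, σ⟫ - ⟪x, k⟫), sq_nonneg ‖(y - ⟪σ, y⟫ • σ) - Pks k σ (x - ⟪k, x⟫ • k)‖, hP]
end

section
/- Averaged contraction defect over the sphere: let d ≥ 2, X ∈ ℝ^d, k ∈ 𝕊^{d-1}, and let B : 𝕊^{d-1} → [0,∞) be a function of k·σ only. Then ∫_{𝕊^{d-1}} (|X|² - |P_{kσ}X|²) B(k·σ) dσ = ((d-2)/(d-1)) · (∫_{𝕊^{d-1}} [1-(k·σ)²] B(k·σ) dσ) · |Π_{k⊥}X|². -/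
/-!
Put `Y = X - (k·X) k`. On the sphere, `|X|² - |P_{kσ}X|² = (1 - (k·σ)²)|Y|² - (σ·Y)²`, so everything
reduces to the second moment `∫ (σ·u)² B(k·σ) dσ` for `u ⊥ k`. The reflection in `(u - v)^⊥`
swaps two vectors `u, v ⊥ k` of equal length and fixes `k`, hence preserves the weight and the
surface measure: the second moment depends on `|u|` only. Summing it over an orthonormal basis of
the `(d-1)`-dimensional space `k^⊥` gives `Σ (σ·e_i)² = 1 - (k·σ)²`, so it equals
`|u|²/(d-1) · ∫ (1 - (k·σ)²) B(k·σ) dσ`.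
-/

open MeasureTheory
open scoped RealInnerProductSpace

open Metric Module

variable {E : Type*} [NormedAddCommGroup E] [InnerProductSpace ℝ E]

section OrthogonalPart

variable {k : E}

lemma inner_sub_inner_smul_self_eq_zero (hk : ‖k‖ = 1) (x : E) : ⟪k, x - ⟪k, x⟫ • k⟫ = 0 := by
  rw [inner_sub_right, real_inner_smul_right, real_inner_self_eq_norm_sq, hk]
  ring

lemma norm_sub_inner_smul_self_sq (hk : ‖k‖ = 1) (x : E) :
    ‖x - ⟪k, x⟫ • k‖ ^ 2 = ‖x‖ ^ 2 - ⟪k, x⟫ ^ 2 := by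
  rw [norm_sub_sq_real, norm_smul, hk, real_inner_smul_right, real_inner_comm, Real.norm_eq_abs,
    mul_one, sq_abs]
  ring

lemma inner_sub_inner_smul_self_left {u : E} (hu : ⟪k, u⟫ = 0) (x : E) :
    ⟪x - ⟪k, x⟫ • k, u⟫ = ⟪x, u⟫ := by
  rw [inner_sub_left, real_inner_smul_left, hu, mul_zero, sub_zero]

lemma inner_sq_le_of_inner_eq_zero (hk : ‖k‖ = 1) {u : E} (hu : ⟪k, u⟫ = 0) (x : E) :
    ⟪x, u⟫ ^ 2 ≤ (‖x‖ ^ 2 - ⟪k, x⟫ ^ 2) * ‖u‖ ^ 2 := by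
  rw [← inner_sub_inner_smul_self_left hu, ← norm_sub_inner_smul_self_sq hk, ← mul_pow]
  exact sq_le_sq' (neg_le_of_abs_le (abs_real_inner_le_norm _ _)) (real_inner_le_norm _ _)

lemma sum_inner_orthonormalBasis_sq {ι : Type*} [Fintype ι] (hk : ‖k‖ = 1)
    (b : OrthonormalBasis ι ℝ (ℝ ∙ k)ᗮ) (x : E) :
    ∑ i, ⟪x, b i⟫ ^ 2 = ‖x‖ ^ 2 - ⟪k, x⟫ ^ 2 := by
  have hw : x - ⟪k, x⟫ • k ∈ (ℝ ∙ k)ᗮ :=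
    Submodule.mem_orthogonal_singleton_iff_inner_right.2 (inner_sub_inner_smul_self_eq_zero hk x)
  rw [← norm_sub_inner_smul_self_sq hk, ← Submodule.coe_mk _ hw, ← Submodule.coe_norm,
    ← b.sum_sq_inner_left]
  refine Finset.sum_congr rfl fun i _ => ?_
  rw [Submodule.coe_inner, inner_sub_inner_smul_self_left
    (Submodule.mem_orthogonal_singleton_iff_inner_right.1 (b i).2)]

end OrthogonalPart

lemma norm_sq_sub_norm_Pks_sq {d : ℕ} {k σ : EuclideanSpace ℝ (Fin d)} (hk : ‖k‖ = 1)
    (hσ : ‖σ‖ = 1) (X : EuclideanSpace ℝ (Fin d)) :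
    ‖X‖ ^ 2 - ‖Pks k σ X‖ ^ 2
      = (1 - ⟪k, σ⟫ ^ 2) * ‖X - ⟪k, X⟫ • k‖ ^ 2 - ⟪σ, X - ⟪k, X⟫ • k⟫ ^ 2 := by
  have hkk : ⟪k, k⟫ = 1 := by rw [real_inner_self_eq_norm_sq, hk, one_pow]
  have hσσ : ⟪σ, σ⟫ = 1 := by rw [real_inner_self_eq_norm_sq, hσ, one_pow]
  simp only [← real_inner_self_eq_norm_sq, Pks, inner_sub_left, inner_sub_right, inner_add_left,
    inner_add_right, real_inner_smul_left, real_inner_smul_right, hkk, hσσ, real_inner_comm σ k,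
    real_inner_comm X k, real_inner_comm X σ]
  ring

variable [MeasurableSpace E] [BorelSpace E]

lemma LinearIsometryEquiv.setIntegral_sphere_comp {G : Type*} [NormedAddCommGroup G]
    [NormedSpace ℝ G] (R : E ≃ₗᵢ[ℝ] E) (f : E → G) (s r : ℝ) :
    ∫ σ in sphere 0 r, f (R σ) ∂μH[s] = ∫ σ in sphere 0 r, f σ ∂μH[s] := by
  convert (R.toIsometryEquiv.measurePreserving_hausdorffMeasure s).setIntegral_preimage_emb
    R.toIsometryEquiv.toHomeomorph.measurableEmbedding f (sphere 0 r) using 2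
  · ext x
    simp
  · rfl

lemma setIntegral_sphere_inner_inner_eq {G : Type*} [NormedAddCommGroup G] [NormedSpace ℝ G]
    (F : ℝ → ℝ → G) {k u v : E} (huv : ‖u‖ = ‖v‖) (hk : ⟪k, u⟫ = ⟪k, v⟫) (s r : ℝ) :
    ∫ σ in sphere 0 r, F ⟪σ, u⟫ ⟪k, σ⟫ ∂μH[s] = ∫ σ in sphere 0 r, F ⟪σ, v⟫ ⟪k, σ⟫ ∂μH[s] := by
  set R := (ℝ ∙ (u - v))ᗮ.reflection
  have hRu : R u = v := Submodule.reflection_sub huv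
  have hRk : R k = k := Submodule.reflection_mem_subspace_eq_self <|
    Submodule.mem_orthogonal_singleton_iff_inner_left.2 (by rw [inner_sub_right, hk, sub_self])
  conv_rhs => rw [← R.setIntegral_sphere_comp _ s r]
  congr! 3 with σ
  · rw [← hRu, LinearIsometryEquiv.inner_map_map]
  · conv_rhs => rw [← hRk]
    rw [LinearIsometryEquiv.inner_map_map]

lemma integrableOn_sphere_inner_sq_mul {k u : E} (hk : ‖k‖ = 1)
    (hu : ⟪k, u⟫ = 0) {B : ℝ → ℝ} {μ : Measure E}
    (hInt : IntegrableOn (fun σ => (1 - ⟪k, σ⟫ ^ 2) * B ⟪k, σ⟫) (sphere 0 1) μ) :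
    IntegrableOn (fun σ => ⟪σ, u⟫ ^ 2 * B ⟪k, σ⟫) (sphere 0 1) μ := by
  have hS : MeasurableSet (sphere (0 : E) 1) := isClosed_sphere.measurableSet
  have hnonneg : ∀ σ ∈ sphere (0 : E) 1, 0 ≤ 1 - ⟪k, σ⟫ ^ 2 := fun σ hσ => by
    rw [← one_pow 2, ← mem_sphere_zero_iff_norm.1 hσ, ← norm_sub_inner_smul_self_sq hk]
    positivity
  have hle : ∀ σ ∈ sphere (0 : E) 1, ⟪σ, u⟫ ^ 2 ≤ ‖u‖ ^ 2 * (1 - ⟪k, σ⟫ ^ 2) := fun σ hσ => by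
    simpa [mem_sphere_zero_iff_norm.1 hσ, mul_comm] using inner_sq_le_of_inner_eq_zero hk hu σ
  -- `⟪σ, u⟫² B = (⟪σ, u⟫² / (1 - ⟪k, σ⟫²)) · (1 - ⟪k, σ⟫²) B` with a first factor bounded by `‖u‖²`;
  -- where `1 - ⟪k, σ⟫² = 0` also `⟪σ, u⟫ = 0`, so the junk value `x / 0 = 0` does no harm.
  refine IntegrableOn.congr_fun (hInt.bdd_mul (c := ‖u‖ ^ 2)
    (f := fun σ => ⟪σ, u⟫ ^ 2 / (1 - ⟪k, σ⟫ ^ 2)) (Measurable.aestronglyMeasurable (by fun_prop))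
    (ae_restrict_of_forall_mem hS fun σ hσ => ?_)) (fun σ hσ => ?_) hS
  · rw [Real.norm_of_nonneg (div_nonneg (sq_nonneg _) (hnonneg σ hσ))]
    exact div_le_of_le_mul₀ (hnonneg σ hσ) (sq_nonneg _) (hle σ hσ)
  · rcases eq_or_ne (1 - ⟪k, σ⟫ ^ 2) 0 with h | h
    · have h' : ⟪σ, u⟫ ^ 2 = 0 := le_antisymm (by simpa [h] using hle σ hσ) (sq_nonneg _)
      simp [h, h']
    · field_simp

theorem finrank_sub_one_mul_setIntegral_sphere_inner_sq [FiniteDimensional ℝ E] {k u : E}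
    (hk : ‖k‖ = 1) (hu : ⟪k, u⟫ = 0) {B : ℝ → ℝ} {s : ℝ}
    (hInt : IntegrableOn (fun σ => (1 - ⟪k, σ⟫ ^ 2) * B ⟪k, σ⟫) (sphere 0 1) μH[s]) :
    ((finrank ℝ E : ℝ) - 1) * ∫ σ in sphere 0 1, ⟪σ, u⟫ ^ 2 * B ⟪k, σ⟫ ∂μH[s]
      = ‖u‖ ^ 2 * ∫ σ in sphere 0 1, (1 - ⟪k, σ⟫ ^ 2) * B ⟪k, σ⟫ ∂μH[s] := by
  let b := stdOrthonormalBasis ℝ (ℝ ∙ k)ᗮ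
  have hdim : (finrank ℝ (ℝ ∙ k)ᗮ : ℝ) = finrank ℝ E - 1 := by
    have h := (ℝ ∙ k).finrank_add_finrank_orthogonal
    rw [finrank_span_singleton (norm_ne_zero_iff.1 (by simp [hk]))] at h
    rw [eq_sub_iff_add_eq, ← h]
    push_cast
    ring
  have hbk : ∀ i, ⟪k, ‖u‖ • (b i : E)⟫ = 0 := fun i => by
    rw [real_inner_smul_right, Submodule.mem_orthogonal_singleton_iff_inner_right.1 (b i).2,
      mul_zero]
  calc ((finrank ℝ E : ℝ) - 1) * ∫ σ in sphere 0 1, ⟪σ, u⟫ ^ 2 * B ⟪k, σ⟫ ∂μH[s]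
      = ∑ i, ∫ σ in sphere 0 1, ⟪σ, ‖u‖ • (b i : E)⟫ ^ 2 * B ⟪k, σ⟫ ∂μH[s] := by
        -- `‖u‖ • b i` and `u` have the same length and are both orthogonal to `k`
        rw [← hdim, Finset.sum_congr rfl fun i _ => setIntegral_sphere_inner_inner_eq
          (fun a t => a ^ 2 * B t) (v := u) (by rw [norm_smul, norm_norm, Submodule.norm_coe, b.orthonormal.norm_eq_one, mul_one])
          (by rw [hbk i, hu]) s 1]
        simp
    _ = ∫ σ in sphere 0 1, ∑ i, ⟪σ, ‖u‖ • (b i : E)⟫ ^ 2 * B ⟪k, σ⟫ ∂μH[s] :=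
        (integral_finsetSum _ fun i _ =>
          integrableOn_sphere_inner_sq_mul hk (hbk i) hInt).symm
    _ = ∫ σ in sphere 0 1, ‖u‖ ^ 2 * ((1 - ⟪k, σ⟫ ^ 2) * B ⟪k, σ⟫) ∂μH[s] := by
        refine setIntegral_congr_fun isClosed_sphere.measurableSet fun σ hσ => ?_
        simp only [real_inner_smul_right, mul_pow, ← Finset.sum_mul, ← Finset.mul_sum,
          sum_inner_orthonormalBasis_sq hk b, mem_sphere_zero_iff_norm.1 hσ, one_pow, mul_assoc]
    _ = ‖u‖ ^ 2 * ∫ σ in sphere 0 1, (1 - ⟪k, σ⟫ ^ 2) * B ⟪k, σ⟫ ∂μH[s] :=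
        integral_const_mul _ _

theorem averaged_contraction_defect_general (d : ℕ) (hd : 2 ≤ d)
    (X k : EuclideanSpace ℝ (Fin d)) (hk : ‖k‖ = 1)
    (B : ℝ → ℝ)
    (hInt : IntegrableOn (fun σ => (1 - ⟪k, σ⟫ ^ 2) * B ⟪k, σ⟫)
      (Metric.sphere (0 : EuclideanSpace ℝ (Fin d)) 1) μH[(d : ℝ) - 1]) :
    ∫ σ in Metric.sphere (0 : EuclideanSpace ℝ (Fin d)) 1,
        (‖X‖ ^ 2 - ‖Pks k σ X‖ ^ 2) * B ⟪k, σ⟫ ∂μH[(d : ℝ) - 1]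
      = ((d : ℝ) - 2) / ((d : ℝ) - 1)
        * (∫ σ in Metric.sphere (0 : EuclideanSpace ℝ (Fin d)) 1,
            (1 - ⟪k, σ⟫ ^ 2) * B ⟪k, σ⟫ ∂μH[(d : ℝ) - 1])
        * ‖X - ⟪k, X⟫ • k‖ ^ 2 := by
  set Y := X - ⟪k, X⟫ • k
  have hY : ⟪k, Y⟫ = 0 := inner_sub_inner_smul_self_eq_zero hk X
  have hmoment := finrank_sub_one_mul_setIntegral_sphere_inner_sq hk hY hInt
  rw [finrank_euclideanSpace_fin] at hmoment
  have hdefect : Set.EqOn (fun σ => (‖X‖ ^ 2 - ‖Pks k σ X‖ ^ 2) * B ⟪k, σ⟫)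
      (fun σ => ‖Y‖ ^ 2 * ((1 - ⟪k, σ⟫ ^ 2) * B ⟪k, σ⟫) - ⟪σ, Y⟫ ^ 2 * B ⟪k, σ⟫)
      (sphere 0 1) := fun σ hσ => by
    simp only [norm_sq_sub_norm_Pks_sq hk (mem_sphere_zero_iff_norm.1 hσ)]
    ring
  have hd1 : (d : ℝ) - 1 ≠ 0 := by
    have : (2 : ℝ) ≤ d := by exact_mod_cast hd
    linarith
  rw [setIntegral_congr_fun isClosed_sphere.measurableSet hdefect,
    integral_sub (hInt.const_mul _) (integrableOn_sphere_inner_sq_mul hk hY hInt),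
    integral_const_mul]
  field_simp
  linear_combination -hmoment

/-- **Averaged contraction defect over the sphere.**
For `d ≥ 2`, `X ∈ ℝ^d`, a unit vector `k` and a nonnegative kernel `B` depending only on
`k·σ`, one has
`∫_{𝕊^{d-1}} (|X|² - |P_{kσ}X|²) B(k·σ) dσ
  = ((d-2)/(d-1)) (∫_{𝕊^{d-1}} (1-(k·σ)²) B(k·σ) dσ) |Π_{k⊥}X|²`,
where the sphere carries its `(d-1)`-dimensional Hausdorff (surface) measure. -/
theorem averaged_contraction_defect (d : ℕ) (hd : 2 ≤ d)
    (X k : EuclideanSpace ℝ (Fin d)) (hk : ‖k‖ = 1)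
    (B : ℝ → ℝ) (hB : ∀ t, 0 ≤ B t) (hBm : Measurable B)
    (hInt : IntegrableOn (fun σ => (1 - ⟪k, σ⟫ ^ 2) * B ⟪k, σ⟫)
      (Metric.sphere (0 : EuclideanSpace ℝ (Fin d)) 1) μH[(d : ℝ) - 1]) :
    ∫ σ in Metric.sphere (0 : EuclideanSpace ℝ (Fin d)) 1,
        (‖X‖ ^ 2 - ‖Pks k σ X‖ ^ 2) * B ⟪k, σ⟫ ∂μH[(d : ℝ) - 1]
      = ((d : ℝ) - 2) / ((d : ℝ) - 1)
        * (∫ σ in Metric.sphere (0 : EuclideanSpace ℝ (Fin d)) 1,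
            (1 - ⟪k, σ⟫ ^ 2) * B ⟪k, σ⟫ ∂μH[(d : ℝ) - 1])
        * ‖X - ⟪k, X⟫ • k‖ ^ 2 :=
  averaged_contraction_defect_general d hd X k hk B hInt
end

section
/- Key complex inductive estimate: for every integer n ≥ 0, every ρ ∈ [0,1] and every α ∈ [0,π], Re[1 - (ρ e^{iα})^{2n}] ≤ n(1 - ρ²) + 2n² ρ² sin²α. -/
open Complex

lemma abs_sin_nat_mul_le (n : ℕ) (x : ℝ) : |Real.sin (n * x)| ≤ n * |Real.sin x| := by
  induction n with
  | zero => simp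
  | succ n ih =>
    have : ((n : ℝ) + 1) * x = n * x + x := by ring
    push_cast
    rw [this, Real.sin_add]
    calc |Real.sin (n*x) * Real.cos x + Real.cos (n*x) * Real.sin x|
        ≤ |Real.sin (n*x) * Real.cos x| + |Real.cos (n*x) * Real.sin x| := abs_add_le _ _
      _ ≤ |Real.sin (n*x)| + |Real.sin x| := by
          rw [abs_mul, abs_mul]
          gcongr
          · calc |Real.sin (n*x)| * |Real.cos x| ≤ |Real.sin (n*x)| * 1 := by
                  gcongr; exact Real.abs_cos_le_one x
              _ = |Real.sin (n*x)| := mul_one _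
          · calc |Real.cos (n*x)| * |Real.sin x| ≤ 1 * |Real.sin x| := by
                  gcongr; exact Real.abs_cos_le_one _
              _ = |Real.sin x| := one_mul _
      _ ≤ n * |Real.sin x| + |Real.sin x| := by gcongr
      _ = (n + 1) * |Real.sin x| := by ring

lemma re_pow_eq (ρ α : ℝ) (m : ℕ) :
    (((ρ : ℂ) * Complex.exp (α * Complex.I)) ^ m).re = ρ ^ m * Real.cos (m * α) := by
  rw [mul_pow, ← Complex.exp_nat_mul]
  have : (m : ℂ) * (α * Complex.I) = ((m * α : ℝ) : ℂ) * Complex.I := by push_cast; ring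
  rw [this, ← Complex.ofReal_pow, Complex.re_ofReal_mul, Complex.exp_ofReal_mul_I_re]

/-- **Key complex inductive estimate:** for every `n : ℕ`, `ρ ∈ [0,1]` and `α ∈ [0,π]`,
`Re[1 - (ρ e^{iα})^{2n}] ≤ n(1-ρ²) + 2n² ρ² sin²α`. -/
theorem re_one_sub_pow_le (n : ℕ) (ρ : ℝ) (hρ₀ : 0 ≤ ρ) (hρ₁ : ρ ≤ 1)
    (α : ℝ) (hα₀ : 0 ≤ α) (hα₁ : α ≤ Real.pi) :
    (1 - ((ρ : ℂ) * Complex.exp (α * Complex.I)) ^ (2 * n)).re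
      ≤ n * (1 - ρ ^ 2) + 2 * n ^ 2 * ρ ^ 2 * Real.sin α ^ 2 := by
  have hre : ∀ m : ℕ, (1 - ((ρ : ℂ) * Complex.exp (α * Complex.I)) ^ m).re
      = 1 - ρ ^ m * Real.cos (m * α) := by
    intro m
    rw [Complex.sub_re, re_pow_eq]
    simp
  rw [hre]
  have hs : 0 ≤ Real.sin α := Real.sin_nonneg_of_nonneg_of_le_pi hα₀ hα₁
  induction n with
  | zero => simp
  | succ n ih =>
    have hpow : ρ ^ (2 * n) ≤ 1 := pow_le_one₀ hρ₀ hρ₁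
    have hpow0 : 0 ≤ ρ ^ (2 * n) := pow_nonneg hρ₀ _
    have hcos1 : Real.cos ((2 * n : ℕ) * α) ≤ 1 := Real.cos_le_one _
    have hcos2 : -1 ≤ Real.cos ((2 * n : ℕ) * α) := Real.neg_one_le_cos _
    -- key trigonometric identity
    have hid : Real.cos ((2 * n : ℕ) * α) - Real.cos ((2 * (n + 1) : ℕ) * α)
        = 2 * Real.sin ((2 * n + 1) * α) * Real.sin α := by
      rw [Real.cos_sub_cos]
      push_cast
      ring_nf
      rw [Real.sin_neg]
      ring
    have hsin : Real.sin ((2 * n + 1) * α) ≤ (2 * n + 1) * Real.sin α := by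
      have := abs_sin_nat_mul_le (2 * n + 1) α
      rw [_root_.abs_of_nonneg hs] at this
      calc Real.sin ((2 * n + 1) * α) ≤ |Real.sin (((2 * n + 1 : ℕ) : ℝ) * α)| := by
              push_cast; exact le_abs_self _
        _ ≤ (2 * n + 1 : ℕ) * Real.sin α := this
        _ = (2 * n + 1) * Real.sin α := by push_cast; ring
    -- bound the telescoping increment
    have hρpow : ρ ^ (2 * (n + 1)) = ρ ^ (2 * n) * ρ ^ 2 := by ring
    have hstep : ρ ^ (2 * n) * Real.cos ((2 * n : ℕ) * α)
        - ρ ^ (2 * (n + 1)) * Real.cos ((2 * (n + 1) : ℕ) * α)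
        ≤ (1 - ρ ^ 2) + 2 * (2 * n + 1) * ρ ^ 2 * Real.sin α ^ 2 := by
      have hρ2 : ρ ^ (2 * n) * ρ ^ 2 ≤ ρ ^ 2 := by nlinarith [sq_nonneg ρ]
      have e1 : ρ ^ (2 * n) * Real.cos ((2 * n : ℕ) * α)
          - ρ ^ (2 * (n + 1)) * Real.cos ((2 * (n + 1) : ℕ) * α)
          = ρ ^ (2 * n) * (1 - ρ ^ 2) * Real.cos ((2 * n : ℕ) * α)
            + ρ ^ (2 * n) * ρ ^ 2 *
              (Real.cos ((2 * n : ℕ) * α) - Real.cos ((2 * (n + 1) : ℕ) * α)) := by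
        rw [hρpow]; ring
      rw [e1, hid]
      have b1 : ρ ^ (2 * n) * (1 - ρ ^ 2) * Real.cos ((2 * n : ℕ) * α) ≤ 1 - ρ ^ 2 := by
        have h1ρ : 0 ≤ 1 - ρ ^ 2 := by nlinarith
        nlinarith [mul_le_mul_of_nonneg_left hcos1 (mul_nonneg hpow0 h1ρ),
          mul_le_mul_of_nonneg_right hpow h1ρ, mul_nonneg hpow0 h1ρ]
      have b2 : ρ ^ (2 * n) * ρ ^ 2 * (2 * Real.sin ((2 * n + 1) * α) * Real.sin α)
          ≤ 2 * (2 * n + 1) * ρ ^ 2 * Real.sin α ^ 2 := by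
        have h0 : 0 ≤ ρ ^ (2 * n) * ρ ^ 2 := by positivity
        calc ρ ^ (2 * n) * ρ ^ 2 * (2 * Real.sin ((2 * n + 1) * α) * Real.sin α)
            ≤ ρ ^ (2 * n) * ρ ^ 2 * (2 * ((2 * n + 1) * Real.sin α) * Real.sin α) := by
              apply mul_le_mul_of_nonneg_left _ h0
              nlinarith
          _ ≤ ρ ^ 2 * (2 * ((2 * n + 1) * Real.sin α) * Real.sin α) := by
              apply mul_le_mul_of_nonneg_right hρ2
              positivity
          _ = 2 * (2 * n + 1) * ρ ^ 2 * Real.sin α ^ 2 := by ring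
      linarith
    have hpush : ((n + 1 : ℕ) : ℝ) = (n : ℝ) + 1 := by push_cast; ring
    push_cast
    push_cast at ih hstep
    nlinarith [hstep, ih]
end

section
/- Optimal fourth-power inequality on the circle: for a smooth, strictly positive 2π-periodic function f, ∫_{𝕊¹} (f')⁴/f³ ≤ (9/4) ∫_{𝕊¹} (f'')²/f. -/
open MeasureTheory intervalIntegral

/-- **Optimal fourth-power inequality on the circle.**
For a smooth, strictly positive, `2π`-periodic function `f`,
`∫ (f')⁴/f³ ≤ (9/4) ∫ (f'')²/f` over one period. -/
theorem fourth_power_inequality_circle (f : ℝ → ℝ)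
    (hsm : ContDiff ℝ (⊤ : ℕ∞) f) (hpos : ∀ x, 0 < f x)
    (hper : ∀ x, f (x + 2 * Real.pi) = f x) :
    (∫ θ in (0 : ℝ)..(2 * Real.pi), (deriv f θ) ^ 4 / (f θ) ^ 3)
      ≤ 9 / 4 * ∫ θ in (0 : ℝ)..(2 * Real.pi), (deriv (deriv f) θ) ^ 2 / f θ := by
  have hsmi : ContDiff ℝ (⊤ : ℕ∞) f := hsm.of_le (by simp)
  obtain ⟨hdiff, hsm'⟩ := contDiff_infty_iff_deriv.mp hsmi
  obtain ⟨hdiff', hsm''⟩ := contDiff_infty_iff_deriv.mp hsm'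
  have hc0 : Continuous f := hsm.continuous
  have hc1 : Continuous (deriv f) := hsm'.continuous
  have hc2 : Continuous (deriv (deriv f)) := hsm''.continuous
  have hne : ∀ x, f x ≠ 0 := fun x => (hpos x).ne'
  have hperP : Function.Periodic f (2 * Real.pi) := hper
  have hperf0 : f (2 * Real.pi) = f 0 := by simpa using hper 0
  have hper' : deriv f (2 * Real.pi) = deriv f 0 := by
    have h1 : (fun x => f (x + 2 * Real.pi)) = f := funext hper
    have h2 := deriv_comp_add_const (f := f) (a := 2 * Real.pi) (x := (0 : ℝ))
    rw [h1] at h2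
    simpa using h2.symm
  -- continuity of the three integrands
  have hcontC : Continuous (fun x => (deriv f x) ^ 4 / (f x) ^ 3) :=
    (hc1.pow 4).div (hc0.pow 3) (fun x => pow_ne_zero _ (hne x))
  have hcontA : Continuous (fun x => (deriv (deriv f) x) ^ 2 / f x) :=
    (hc2.pow 2).div hc0 hne
  have hcontB : Continuous (fun x => deriv (deriv f) x * (deriv f x) ^ 2 / (f x) ^ 2) :=
    (hc2.mul (hc1.pow 2)).div (hc0.pow 2) (fun x => pow_ne_zero _ (hne x))
  have hintC : IntervalIntegrable (fun x => (deriv f x) ^ 4 / (f x) ^ 3) volume 0 (2 * Real.pi) :=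
    hcontC.intervalIntegrable _ _
  have hintA : IntervalIntegrable (fun x => (deriv (deriv f) x) ^ 2 / f x) volume 0 (2 * Real.pi) :=
    hcontA.intervalIntegrable _ _
  have hintB : IntervalIntegrable (fun x => deriv (deriv f) x * (deriv f x) ^ 2 / (f x) ^ 2) volume 0 (2 * Real.pi) :=
    hcontB.intervalIntegrable _ _
  set C := ∫ θ in (0 : ℝ)..(2 * Real.pi), (deriv f θ) ^ 4 / (f θ) ^ 3 with hC
  set A := ∫ θ in (0 : ℝ)..(2 * Real.pi), (deriv (deriv f) θ) ^ 2 / f θ with hA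
  set B := ∫ θ in (0 : ℝ)..(2 * Real.pi), deriv (deriv f) θ * (deriv f θ) ^ 2 / (f θ) ^ 2
    with hB
  -- derivative of (f')³/f²
  have hg : ∀ x, HasDerivAt (fun x => (deriv f x) ^ 3 / (f x) ^ 2)
      (3 * (deriv (deriv f) x * (deriv f x) ^ 2 / (f x) ^ 2)
        - 2 * ((deriv f x) ^ 4 / (f x) ^ 3)) x := by
    intro x
    have hf : HasDerivAt f (deriv f x) x := (hdiff x).hasDerivAt
    have hf' : HasDerivAt (deriv f) (deriv (deriv f) x) x := (hdiff' x).hasDerivAt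
    have hp : HasDerivAt (fun x => (deriv f x) ^ 3)
        (3 * (deriv f x) ^ 2 * deriv (deriv f) x) x := by
      simpa using hf'.fun_pow 3
    have hq : HasDerivAt (fun x => (f x) ^ 2) (2 * f x * deriv f x) x := by
      simpa using hf.fun_pow 2
    have := hp.fun_div hq (pow_ne_zero _ (hne x))
    have h0 : f x ≠ 0 := hne x
    refine this.congr_deriv ?_
    field_simp
  have hcontD : Continuous (fun x => 3 * (deriv (deriv f) x * (deriv f x) ^ 2 / (f x) ^ 2)
      - 2 * ((deriv f x) ^ 4 / (f x) ^ 3)) :=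
    (continuous_const.mul hcontB).sub (continuous_const.mul hcontC)
  have hzero : (∫ x in (0 : ℝ)..(2 * Real.pi),
      (3 * (deriv (deriv f) x * (deriv f x) ^ 2 / (f x) ^ 2)
        - 2 * ((deriv f x) ^ 4 / (f x) ^ 3))) = 0 := by
    rw [intervalIntegral.integral_eq_sub_of_hasDerivAt (fun x _ => hg x)
      ((hcontD.intervalIntegrable _ _ : IntervalIntegrable _ volume _ _))]
    rw [hper', hperf0]
    ring
  have hBC : 3 * B - 2 * C = 0 := by
    rw [hB, hC, ← intervalIntegral.integral_const_mul, ← intervalIntegral.integral_const_mul,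
      ← intervalIntegral.integral_sub (hintB.const_mul 3) (hintC.const_mul 2)]
    exact hzero
  -- pointwise inequality
  have key : ∀ θ ∈ Set.Icc (0 : ℝ) (2 * Real.pi),
      4 / 3 * (deriv (deriv f) θ * (deriv f θ) ^ 2 / (f θ) ^ 2)
        ≤ (deriv (deriv f) θ) ^ 2 / f θ + 4 / 9 * ((deriv f θ) ^ 4 / (f θ) ^ 3) := by
    intro θ _
    have hf := hpos θ
    have h0 : f θ ≠ 0 := hne θ
    rw [← sub_nonneg]
    have heq : (deriv (deriv f) θ) ^ 2 / f θ + 4 / 9 * ((deriv f θ) ^ 4 / (f θ) ^ 3)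
        - 4 / 3 * (deriv (deriv f) θ * (deriv f θ) ^ 2 / (f θ) ^ 2)
        = (deriv (deriv f) θ * f θ - 2 / 3 * (deriv f θ) ^ 2) ^ 2 / (f θ) ^ 3 := by
      field_simp
      ring
    rw [heq]
    positivity
  have hmono : (∫ θ in (0 : ℝ)..(2 * Real.pi),
        4 / 3 * (deriv (deriv f) θ * (deriv f θ) ^ 2 / (f θ) ^ 2))
      ≤ ∫ θ in (0 : ℝ)..(2 * Real.pi),
        ((deriv (deriv f) θ) ^ 2 / f θ + 4 / 9 * ((deriv f θ) ^ 4 / (f θ) ^ 3)) :=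
    intervalIntegral.integral_mono_on (by positivity)
      (hintB.const_mul _) (hintA.add (hintC.const_mul _)) key
  rw [intervalIntegral.integral_const_mul,
    intervalIntegral.integral_add hintA (hintC.const_mul _),
    intervalIntegral.integral_const_mul] at hmono
  -- hmono : 4/3 * B ≤ A + 4/9 * C ; hBC : 3B = 2C
  linarith
end

section
/- Differential log-Sobolev on the circle with doubled periodicity: for a smooth, strictly positive probability density f on 𝕊¹ = ℝ/(2πℤ) that is additionally π-periodic (f(θ+π) = f(θ)), one has ∫_{𝕊¹} f·((log f)'')² dθ ≥ 16 ∫_{𝕊¹} ((√f)')² dθ = 4 I(f). -/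
open MeasureTheory intervalIntegral

noncomputable section

namespace DLS

open Complex Set

lemma rpow_two_toReal (r : ℝ) : r ^ ((2 : ENNReal).toReal) = r ^ 2 := by
  rw [show ((2 : ENNReal).toReal) = ((2 : ℕ) : ℝ) by norm_num, Real.rpow_natCast]

lemma parseval_periodic (v : ℝ → ℝ) (hv : Continuous v)
    (hper : Function.Periodic v Real.pi) :
    Summable (fun n : ℤ =>
      ‖fourierCoeffOn (lt_add_of_pos_right 0 Real.pi_pos) (fun x => (v x : ℂ)) n‖ ^ 2) ∧
    (∑' n : ℤ,
      ‖fourierCoeffOn (lt_add_of_pos_right 0 Real.pi_pos) (fun x => (v x : ℂ)) n‖ ^ 2)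
      = (1 / Real.pi) * ∫ x in (0:ℝ)..Real.pi, v x ^ 2 := by
  haveI : Fact (0 < Real.pi) := ⟨Real.pi_pos⟩
  set V : ℝ → ℂ := fun x => (v x : ℂ) with hV
  have hVc : Continuous V := Complex.continuous_ofReal.comp hv
  have hV0 : V 0 = V (0 + Real.pi) := by have := hper 0; simp [hV]; simpa using this.symm
  set G : C(AddCircle Real.pi, ℂ) :=
    ⟨AddCircle.liftIco Real.pi 0 V, AddCircle.liftIco_continuous hV0 hVc.continuousOn⟩ with hG
  have hGcoeff : ∀ n : ℤ, fourierCoeff (⇑G) n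
      = fourierCoeffOn (lt_add_of_pos_right 0 Real.pi_pos) V n := fun n =>
    fourierCoeff_liftIco_eq V n
  set F := ContinuousMap.toLp (E := ℂ) 2 AddCircle.haarAddCircle ℂ G with hF
  have hFcoeff : ∀ n : ℤ, fourierCoeff (⇑F) n = fourierCoeff (⇑G) n := fourierCoeff_toLp G
  -- Parseval
  have hP := tsum_sq_fourierCoeff F
  have hFG : (∫ t : AddCircle Real.pi, ‖F t‖ ^ 2 ∂AddCircle.haarAddCircle)
      = ∫ t : AddCircle Real.pi, ‖G t‖ ^ 2 ∂AddCircle.haarAddCircle := by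
    refine integral_congr_ae ?_
    filter_upwards [ContinuousMap.coeFn_toLp (p := 2) (μ := AddCircle.haarAddCircle) (𝕜 := ℂ) G] with t ht
    rw [ht]
  -- integral over haar vs interval integral
  have hIv : (∫ x in (0:ℝ)..(0 + Real.pi), ‖G (x : AddCircle Real.pi)‖ ^ 2)
      = ∫ t : AddCircle Real.pi, ‖G t‖ ^ 2 ∂volume :=
    AddCircle.intervalIntegral_preimage Real.pi 0 (fun t => ‖G t‖ ^ 2)
  have hvol : (∫ t : AddCircle Real.pi, ‖G t‖ ^ 2 ∂volume)
      = Real.pi * ∫ t : AddCircle Real.pi, ‖G t‖ ^ 2 ∂AddCircle.haarAddCircle := by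
    rw [AddCircle.volume_eq_smul_haarAddCircle, MeasureTheory.integral_smul_measure,
      ENNReal.toReal_ofReal Real.pi_pos.le, smul_eq_mul]
  have hGval : (∫ x in (0:ℝ)..(0 + Real.pi), ‖G (x : AddCircle Real.pi)‖ ^ 2)
      = ∫ x in (0:ℝ)..Real.pi, v x ^ 2 := by
    rw [zero_add]
    rw [intervalIntegral.integral_of_le Real.pi_pos.le,
      intervalIntegral.integral_of_le Real.pi_pos.le,
      MeasureTheory.integral_Ioc_eq_integral_Ioo,
      MeasureTheory.integral_Ioc_eq_integral_Ioo]
    refine setIntegral_congr_fun measurableSet_Ioo (fun x hx => ?_)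
    have hx' : x ∈ Ico (0:ℝ) (0 + Real.pi) := by
      rw [zero_add]; exact ⟨hx.1.le, hx.2⟩
    show ‖G ((x : ℝ) : AddCircle Real.pi)‖ ^ 2 = v x ^ 2
    rw [hG]
    show ‖AddCircle.liftIco Real.pi 0 V ((x : ℝ) : AddCircle Real.pi)‖ ^ 2 = v x ^ 2
    rw [AddCircle.liftIco_coe_apply hx']
    simp [hV, _root_.sq_abs]
  have key : (∑' n : ℤ, ‖fourierCoeffOn (lt_add_of_pos_right 0 Real.pi_pos) V n‖ ^ 2)
      = (1 / Real.pi) * ∫ x in (0:ℝ)..Real.pi, v x ^ 2 := by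
    have h1 : (∑' n : ℤ, ‖fourierCoeffOn (lt_add_of_pos_right 0 Real.pi_pos) V n‖ ^ 2)
        = ∫ t : AddCircle Real.pi, ‖F t‖ ^ 2 ∂AddCircle.haarAddCircle := by
      rw [← hP]
      exact tsum_congr (fun n => by rw [hFcoeff, hGcoeff])
    rw [h1, hFG]
    rw [hGval.symm, hIv, hvol]
    field_simp
  refine ⟨?_, key⟩
  · have hmem := lp.memℓp (fourierBasis.repr F)
    have hs := hmem.summable (by norm_num : 0 < (2 : ENNReal).toReal)
    simp_rw [rpow_two_toReal] at hs
    refine hs.congr (fun n => ?_)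
    rw [fourierBasis_repr, hFcoeff, hGcoeff]


lemma periodic_of_hasDerivAt {w w' : ℝ → ℝ} {c : ℝ}
    (hw : ∀ x, HasDerivAt w (w' x) x) (hp : Function.Periodic w c) :
    Function.Periodic w' c := by
  intro x
  have h1 : HasDerivAt (fun y => w (y + c)) (w' (x + c)) x := by
    simpa [Function.comp_def] using (hw (x + c)).comp x ((hasDerivAt_id x).add_const c)
  have h2 : (fun y => w (y + c)) = w := funext fun y => hp y
  rw [h2] at h1
  exact h1.unique (hw x)

lemma wirtinger_pi (u u' : ℝ → ℝ) (hu : ∀ x, HasDerivAt u (u' x) x)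
    (hc' : Continuous u') (hper : Function.Periodic u Real.pi)
    (hmean : ∫ x in (0:ℝ)..Real.pi, u x = 0) :
    4 * ∫ x in (0:ℝ)..Real.pi, u x ^ 2 ≤ ∫ x in (0:ℝ)..Real.pi, u' x ^ 2 := by
  haveI : Fact (0 < Real.pi) := ⟨Real.pi_pos⟩
  have hcu : Continuous u := by
    refine continuous_iff_continuousAt.mpr fun x => (hu x).continuousAt
  have hper' : Function.Periodic u' Real.pi := periodic_of_hasDerivAt hu hper
  set hab : (0:ℝ) < 0 + Real.pi := lt_add_of_pos_right 0 Real.pi_pos with hhab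
  set U : ℝ → ℂ := fun x => (u x : ℂ) with hU
  set U' : ℝ → ℂ := fun x => (u' x : ℂ) with hU'
  set c : ℤ → ℂ := fun n => fourierCoeffOn hab U n with hc
  set c' : ℤ → ℂ := fun n => fourierCoeffOn hab U' n with hcc'
  have hS := parseval_periodic u hcu hper
  have hS' := parseval_periodic u' hc' hper'
  have hint : ∫ x in (0:ℝ)..Real.pi, u' x = 0 := by
    rw [intervalIntegral.integral_eq_sub_of_hasDerivAt (fun x _ => hu x)
      (hc'.intervalIntegrable _ _)]
    have := hper 0
    simp at this
    simp [this]
  -- zero modes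
  have hc0 : c 0 = 0 := by
    rw [hc]
    simp only [fourierCoeffOn_eq_integral, neg_zero, fourier_zero, one_smul]
    rw [hU]
    rw [intervalIntegral.integral_ofReal]
    have h0 : ∫ x in (0:ℝ)..(0 + Real.pi), u x = 0 := by rwa [zero_add]
    rw [h0]
    simp
  have hc'0 : c' 0 = 0 := by
    rw [hcc']
    simp only [fourierCoeffOn_eq_integral, neg_zero, fourier_zero, one_smul]
    rw [hU', intervalIntegral.integral_ofReal]
    have h0 : ∫ x in (0:ℝ)..(0 + Real.pi), u' x = 0 := by rwa [zero_add]
    rw [h0]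
    simp
  -- derivative relation
  have hterm : ∀ n : ℤ, 4 * ‖c n‖ ^ 2 ≤ ‖c' n‖ ^ 2 := by
    intro n
    rcases eq_or_ne n 0 with rfl | hn
    · rw [hc0, hc'0]; simp
    · have hder := fourierCoeffOn_of_hasDerivAt hab hn
        (fun x _ => (hu x).ofReal_comp)
        ((Complex.continuous_ofReal.comp hc').intervalIntegrable _ _)
      have hU0 : U (0 + Real.pi) - U 0 = 0 := by
        have := hper 0
        simp only [hU]
        rw [this]
        simp
      rw [hU0, mul_zero, zero_sub] at hder
      have h2 := congrArg norm hder
      rw [show ∀ z : ℂ, ‖1 / (-2 * (Real.pi:ℂ) * Complex.I * n) * z‖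
            = 1/(2*Real.pi*|(n:ℝ)|) * ‖z‖ from fun z => by
          simp [map_mul, map_div₀, Complex.norm_real,
            Complex.norm_intCast, abs_of_pos Real.pi_pos]] at h2
      rw [norm_neg, norm_mul] at h2
      rw [show ‖((((0:ℝ) + Real.pi : ℝ)) : ℂ) - (((0:ℝ)) : ℂ)‖ = Real.pi by
        rw [Complex.ofReal_zero, sub_zero, Complex.norm_real, Real.norm_eq_abs,
          _root_.abs_of_nonneg (by positivity : (0:ℝ) ≤ 0 + Real.pi), zero_add]] at h2
      have h2' : ‖c n‖ = 1 / (2 * Real.pi * |(n:ℝ)|) * (Real.pi * ‖c' n‖) := h2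
      -- h2 : ‖c n‖ = 1/(2π|n|) * (π * ‖c' n‖)
      have h1n : (1:ℝ) ≤ |(n:ℝ)| := by
        rw [← Int.cast_abs]
        exact_mod_cast Int.one_le_abs hn
      have hπ := Real.pi_pos
      have habs : (0:ℝ) < |(n:ℝ)| := lt_of_lt_of_le one_pos h1n
      have h4 : 2 * |(n:ℝ)| * ‖c n‖ = ‖c' n‖ := by
        rw [h2']
        field_simp
      have hnc : (0:ℝ) ≤ ‖c n‖ := norm_nonneg _
      have h6 : (1:ℝ) ≤ |(n:ℝ)|^2 := by nlinarith
      have h7 : 0 ≤ (|(n:ℝ)|^2 - 1) * ‖c n‖^2 := mul_nonneg (by linarith) (sq_nonneg _)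
      have h8 : (2 * |(n:ℝ)| * ‖c n‖) ^ 2 = ‖c' n‖ ^ 2 := by rw [h4]
      nlinarith [h7, h8]
  -- assemble via Parseval
  have hsum1 : Summable (fun n : ℤ => 4 * ‖c n‖ ^ 2) := hS.1.mul_left 4
  have hle := hsum1.tsum_le_tsum hterm hS'.1
  rw [tsum_mul_left] at hle
  rw [hS.2, hS'.2] at hle
  have hπ := Real.pi_pos
  have := mul_le_mul_of_nonneg_left hle hπ.le
  calc 4 * ∫ x in (0:ℝ)..Real.pi, u x ^ 2
      = Real.pi * (4 * (1/Real.pi * ∫ x in (0:ℝ)..Real.pi, u x ^ 2)) := by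
        field_simp
    _ ≤ Real.pi * (1/Real.pi * ∫ x in (0:ℝ)..Real.pi, u' x ^ 2) := this
    _ = ∫ x in (0:ℝ)..Real.pi, u' x ^ 2 := by field_simp

lemma per2 {w : ℝ → ℝ} (hw : Function.Periodic w Real.pi) : w (2 * Real.pi) = w 0 := by
  have h1 := hw Real.pi
  have h2 := hw 0
  rw [zero_add] at h2
  rw [two_mul, h1, h2]

lemma double_integral {w : ℝ → ℝ} (hw : Continuous w)
    (hper : Function.Periodic w Real.pi) :
    ∫ x in (0:ℝ)..(2 * Real.pi), w x = 2 * ∫ x in (0:ℝ)..Real.pi, w x := by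
  have h2 := hper.intervalIntegral_add_eq Real.pi 0
  rw [zero_add] at h2
  rw [show (2:ℝ) * Real.pi = Real.pi + Real.pi by ring,
    ← intervalIntegral.integral_add_adjacent_intervals (a := (0:ℝ)) (b := Real.pi)
      (c := Real.pi + Real.pi) (μ := MeasureTheory.volume)
      (hw.intervalIntegrable _ _) (hw.intervalIntegrable _ _), h2]
  ring

end DLS

open DLS in
/-- **Differential log-Sobolev inequality on the circle with doubled periodicity.**
For a smooth, strictly positive probability density `f` on `𝕊¹ = ℝ/2πℤ` which is moreover
`π`-periodic, one has `∫ f ((log f)'')² ≥ 16 ∫ ((√f)')² = 4 I(f)`, where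
`I(f) = ∫ (f')²/f` is the Fisher information. -/
theorem differential_logSobolev_circle (f : ℝ → ℝ)
    (hsm : ContDiff ℝ (⊤ : ℕ∞) f) (hpos : ∀ x, 0 < f x)
    (hper : ∀ x, f (x + Real.pi) = f x)
    (hprob : ∫ θ in (0 : ℝ)..(2 * Real.pi), f θ = 1) :
    16 * (∫ θ in (0 : ℝ)..(2 * Real.pi), (deriv (fun t => Real.sqrt (f t)) θ) ^ 2)
        ≤ ∫ θ in (0 : ℝ)..(2 * Real.pi),
            f θ * (deriv (deriv (fun t => Real.log (f t))) θ) ^ 2 ∧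
    16 * (∫ θ in (0 : ℝ)..(2 * Real.pi), (deriv (fun t => Real.sqrt (f t)) θ) ^ 2)
        = 4 * ∫ θ in (0 : ℝ)..(2 * Real.pi), (deriv f θ) ^ 2 / f θ := by
  have hπ := Real.pi_pos
  have hf_diff : Differentiable ℝ f := hsm.differentiable (by simp)
  set p1 : ℝ → ℝ := deriv f with hp1def
  have hp1 : ∀ x, HasDerivAt f (p1 x) x := fun x => (hf_diff x).hasDerivAt
  have hsm' : ContDiff ℝ (↑(⊤:ℕ∞)) f := hsm.of_le (by simp)
  have hsm1 : ContDiff ℝ (↑(⊤:ℕ∞)) p1 := (contDiff_infty_iff_deriv.mp hsm').2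
  have hp1_diff : Differentiable ℝ p1 := hsm1.differentiable (by simp)
  set p2 : ℝ → ℝ := deriv p1 with hp2def
  have hp2 : ∀ x, HasDerivAt p1 (p2 x) x := fun x => (hp1_diff x).hasDerivAt
  have hp1c : Continuous p1 := hsm1.continuous
  have hp2c : Continuous p2 := (contDiff_infty_iff_deriv.mp hsm1).2.continuous
  have hfc : Continuous f := hsm.continuous
  -- g = sqrt ∘ f and its derivatives
  set g : ℝ → ℝ := fun x => Real.sqrt (f x) with hgdef
  have hgpos : ∀ x, 0 < g x := fun x => Real.sqrt_pos.mpr (hpos x)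
  have hgne : ∀ x, g x ≠ 0 := fun x => (hgpos x).ne'
  have hgsq : ∀ x, g x ^ 2 = f x := fun x => Real.sq_sqrt (hpos x).le
  have hgc : Continuous g := Real.continuous_sqrt.comp hfc
  set g1 : ℝ → ℝ := fun x => p1 x / (2 * g x) with hg1def
  have hg1c : Continuous g1 :=
    hp1c.div (continuous_const.mul hgc) (fun x => ne_of_gt (mul_pos two_pos (hgpos x)))
  have hgd : ∀ x, HasDerivAt g (g1 x) x := by
    intro x
    have h := (Real.hasDerivAt_sqrt (hpos x).ne').comp x (hp1 x)
    refine h.congr_deriv ?_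
    rw [hg1def]
    field_simp
    rfl
  set g2 : ℝ → ℝ := fun x => (p2 x * (2 * g x) - p1 x * (2 * g1 x)) / (2 * g x) ^ 2
    with hg2def
  have hg1d : ∀ x, HasDerivAt g1 (g2 x) x := fun x =>
    (hp2 x).div ((hgd x).const_mul 2) (ne_of_gt (mul_pos two_pos (hgpos x)))
  have hg2c : Continuous g2 := by
    refine Continuous.div ?_ ?_ (fun x => pow_ne_zero 2 (ne_of_gt (mul_pos two_pos (hgpos x))))
    · exact (hp2c.mul (continuous_const.mul hgc)).sub (hp1c.mul (continuous_const.mul hg1c))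
    · exact (continuous_const.mul hgc).pow 2
  -- log derivatives
  set L1 : ℝ → ℝ := fun x => p1 x / f x with hL1def
  have hLd : ∀ x, HasDerivAt (fun t => Real.log (f t)) (L1 x) x := by
    intro x
    have h := (Real.hasDerivAt_log (hpos x).ne').comp x (hp1 x)
    refine h.congr_deriv ?_
    rw [hL1def]
    field_simp
  set L2 : ℝ → ℝ := fun x => (p2 x * f x - p1 x * p1 x) / (f x) ^ 2 with hL2def
  have hL1d : ∀ x, HasDerivAt L1 (L2 x) x := fun x => (hp2 x).div (hp1 x) (hpos x).ne'
  have hderivg : deriv (fun t => Real.sqrt (f t)) = g1 := funext fun x => (hgd x).deriv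
  have hderivL2 : deriv (deriv (fun t => Real.log (f t))) = L2 := by
    have h1 : deriv (fun t => Real.log (f t)) = L1 := funext fun x => (hLd x).deriv
    rw [h1]
    exact funext fun x => (hL1d x).deriv
  -- periodicity
  have hperf : Function.Periodic f Real.pi := hper
  have hperp1 : Function.Periodic p1 Real.pi := periodic_of_hasDerivAt hp1 hperf
  have hperg : Function.Periodic g Real.pi := fun x => by rw [hgdef]; simp [hper x]
  have hperg1 : Function.Periodic g1 Real.pi := fun x => by
    rw [hg1def]; simp only; rw [hperp1 x, hperg x]
  have hperg2 : Function.Periodic g2 Real.pi := periodic_of_hasDerivAt hg1d hperg1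
  -- integration by parts term
  set hD : ℝ → ℝ := fun x => ((3:ℝ) * g1 x ^ 2 * g2 x * g x - g1 x ^ 3 * g1 x) / g x ^ 2
    with hDdef
  have hDc : Continuous hD := by
    refine Continuous.div ?_ (hgc.pow 2) (fun x => pow_ne_zero 2 (hgne x))
    exact ((((continuous_const.mul (hg1c.pow 2)).mul hg2c).mul hgc).sub
      ((hg1c.pow 3).mul hg1c))
  have hhd : ∀ x, HasDerivAt (fun y => g1 y ^ 3 / g y) (hD x) x := by
    intro x
    have h := (HasDerivAt.fun_pow (hg1d x) 3).div (hgd x) (hgne x)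
    refine h.congr_deriv ?_
    norm_num [hDdef]
  have hIBP : ∫ x in (0:ℝ)..(2 * Real.pi), hD x = 0 := by
    rw [intervalIntegral.integral_eq_sub_of_hasDerivAt (fun x _ => hhd x)
      (hDc.intervalIntegrable _ _)]
    have e1 : g1 (2 * Real.pi) = g1 0 := per2 hperg1
    have e2 : g (2 * Real.pi) = g 0 := per2 hperg
    rw [e1, e2, sub_self]
  -- pointwise identity
  have identity : ∀ x, f x * L2 x ^ 2
      = 4 * g2 x ^ 2 + (4/3) * (g1 x ^ 4 / g x ^ 2) - (8/3) * hD x := by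
    intro x
    have hfx : f x = g x ^ 2 := (hgsq x).symm
    rw [hDdef, hg2def, hg1def, hL2def]
    simp only
    rw [hfx]
    have h2g := hgne x
    field_simp
    ring
  -- integral identity
  have hIint : ∫ x in (0:ℝ)..(2 * Real.pi), f x * L2 x ^ 2
      = (∫ x in (0:ℝ)..(2 * Real.pi), 4 * g2 x ^ 2)
        + ∫ x in (0:ℝ)..(2 * Real.pi), (4/3) * (g1 x ^ 4 / g x ^ 2) := by
    have hcongr : ∫ x in (0:ℝ)..(2 * Real.pi), f x * L2 x ^ 2
        = ∫ x in (0:ℝ)..(2 * Real.pi),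
            (4 * g2 x ^ 2 + (4/3) * (g1 x ^ 4 / g x ^ 2) - (8/3) * hD x) :=
      intervalIntegral.integral_congr (fun x _ => identity x)
    have hi1 : IntervalIntegrable (fun x => 4 * g2 x ^ 2) MeasureTheory.volume 0 (2 * Real.pi) :=
      (continuous_const.mul (hg2c.pow 2)).intervalIntegrable _ _
    have hi2 : IntervalIntegrable (fun x => (4/3) * (g1 x ^ 4 / g x ^ 2))
        MeasureTheory.volume 0 (2 * Real.pi) :=
      (continuous_const.mul ((hg1c.pow 4).div (hgc.pow 2)
        (fun x => pow_ne_zero 2 (hgne x)))).intervalIntegrable _ _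
    have hi3 : IntervalIntegrable (fun x => (8/3) * hD x)
        MeasureTheory.volume 0 (2 * Real.pi) :=
      (continuous_const.mul hDc).intervalIntegrable _ _
    rw [hcongr, intervalIntegral.integral_sub (hi1.add hi2) hi3,
      intervalIntegral.integral_add hi1 hi2,
      intervalIntegral.integral_const_mul ((8:ℝ)/3), hIBP]
    ring
  -- Poincaré
  have hmean : ∫ x in (0:ℝ)..Real.pi, g1 x = 0 := by
    rw [intervalIntegral.integral_eq_sub_of_hasDerivAt (fun x _ => hgd x)
      (hg1c.intervalIntegrable _ _)]
    have := hperg 0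
    rw [zero_add] at this
    rw [this, sub_self]
  have hW := wirtinger_pi g1 g2 hg1d hg2c hperg1 hmean
  have hd1 : ∫ x in (0:ℝ)..(2 * Real.pi), g1 x ^ 2
      = 2 * ∫ x in (0:ℝ)..Real.pi, g1 x ^ 2 :=
    double_integral (hg1c.pow 2) (fun x => by simp [hperg1 x])
  have hd2 : ∫ x in (0:ℝ)..(2 * Real.pi), g2 x ^ 2
      = 2 * ∫ x in (0:ℝ)..Real.pi, g2 x ^ 2 :=
    double_integral (hg2c.pow 2) (fun x => by simp [hperg2 x])
  -- nonnegativity of the extra term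
  have hnn : 0 ≤ ∫ x in (0:ℝ)..(2 * Real.pi), (4/3) * (g1 x ^ 4 / g x ^ 2) := by
    apply intervalIntegral.integral_nonneg (by positivity)
    intro x _
    positivity
  have hconst4 : ∫ x in (0:ℝ)..(2 * Real.pi), 4 * g2 x ^ 2
      = 4 * ∫ x in (0:ℝ)..(2 * Real.pi), g2 x ^ 2 :=
    intervalIntegral.integral_const_mul 4 _
  constructor
  · rw [hderivg, hderivL2]
    have : 16 * ∫ x in (0:ℝ)..(2 * Real.pi), g1 x ^ 2
        ≤ ∫ x in (0:ℝ)..(2 * Real.pi), f x * L2 x ^ 2 := by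
      rw [hIint, hconst4, hd1, hd2]
      linarith
    exact this
  · rw [hderivg]
    have hpt : ∀ x, p1 x ^ 2 / f x = 4 * g1 x ^ 2 := by
      intro x
      have hfx : f x = g x ^ 2 := (hgsq x).symm
      rw [hg1def]
      simp only
      rw [hfx]
      field_simp [hgne x]
      ring
    have : ∫ x in (0:ℝ)..(2 * Real.pi), p1 x ^ 2 / f x
        = ∫ x in (0:ℝ)..(2 * Real.pi), 4 * g1 x ^ 2 :=
      intervalIntegral.integral_congr (fun x _ => hpt x)
    rw [this, intervalIntegral.integral_const_mul]
    ring
end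
end

section
/- Convexity gap for power functions: for every real p > 1 there exists a constant K_p > 0 such that for all x ≥ 0, x^p - 1 - p(x - 1) ≥ K_p (x^{p/2} - 1)². One may take K_p with the property that for all nonnegative reals f, f': (f')^p - f^p - p f^{p-1}(f' - f) ≥ K_p ((f')^{p/2} - f^{p/2})² whenever f > 0 (by homogeneity with x = f'/f). -/
open Real

-- Improved two-term AM-GM with a quadratic gap.
lemma improved_amgm (a θ : ℝ) (ha : 0 ≤ a) (h0 : 0 ≤ θ) (h1 : θ ≤ 1) :
    min θ (1 - θ) * (a ^ (1/2 : ℝ) - 1) ^ 2 ≤ θ * a + (1 - θ) - a ^ θ := by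
  have hsqnn : 0 ≤ a ^ (1/2 : ℝ) := Real.rpow_nonneg ha _
  have hs : (a ^ (1/2 : ℝ)) * (a ^ (1/2 : ℝ)) = a := by
    rw [← Real.rpow_add' ha (by norm_num)]
    norm_num
  rcases le_total θ (1 - θ) with hmin | hmin
  · rw [min_eq_left hmin]
    have key : a ^ θ ≤ (1 - 2*θ) * 1 + (2*θ) * (a ^ (1/2 : ℝ)) := by
      calc a ^ θ = 1 ^ (1 - 2*θ) * (a ^ (1/2 : ℝ)) ^ (2*θ) := by
            rw [Real.one_rpow, one_mul, ← Real.rpow_mul ha]; congr 1; ring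
        _ ≤ _ := Real.geom_mean_le_arith_mean2_weighted
            (by linarith) (by linarith) (by norm_num) hsqnn (by ring)
    nlinarith [hs]
  · rw [min_eq_right hmin]
    have hθ : θ ≠ 0 := by intro h; rw [h] at hmin; linarith
    have key : a ^ θ ≤ (2*θ - 1) * a + (2 - 2*θ) * (a ^ (1/2 : ℝ)) := by
      calc a ^ θ = a ^ (2*θ - 1) * (a ^ (1/2 : ℝ)) ^ (2 - 2*θ) := by
            rw [← Real.rpow_mul ha, ← Real.rpow_add' ha (by intro h; apply hθ; linarith)]
            ring_nf
        _ ≤ _ := Real.geom_mean_le_arith_mean2_weighted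
            (by linarith) (by linarith) ha hsqnn (by ring)
    nlinarith [hs]

/-- **Convexity gap for power functions.**
For every real `p > 1` there is a constant `K_p > 0` such that for all `x ≥ 0`,
`x^p - 1 - p(x-1) ≥ K_p (x^{p/2} - 1)²`, and consequently (by homogeneity) for all
`f > 0`, `f' ≥ 0`, `(f')^p - f^p - p f^{p-1}(f'-f) ≥ K_p ((f')^{p/2} - f^{p/2})²`. -/
theorem convexity_gap_rpow (p : ℝ) (hp : 1 < p) :
    ∃ K : ℝ, 0 < K ∧
      (∀ x : ℝ, 0 ≤ x →
        K * (x ^ (p / 2) - 1) ^ 2 ≤ x ^ p - 1 - p * (x - 1)) ∧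
      (∀ f f' : ℝ, 0 < f → 0 ≤ f' →
        K * (f' ^ (p / 2) - f ^ (p / 2)) ^ 2
          ≤ f' ^ p - f ^ p - p * f ^ (p - 1) * (f' - f)) := by
  have hp0 : (0:ℝ) < p := by linarith
  have H1 : ∀ x : ℝ, 0 ≤ x →
      min 1 (p-1) * (x ^ (p / 2) - 1) ^ 2 ≤ x ^ p - 1 - p * (x - 1) := by
    intro x hx
    have h := improved_amgm (x ^ p) (1/p) (Real.rpow_nonneg hx p)
      (by positivity) (by rw [div_le_one hp0]; linarith)
    have e1 : (x ^ p) ^ (1/2 : ℝ) = x ^ (p/2) := by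
      rw [← Real.rpow_mul hx]; ring_nf
    have e2 : (x ^ p) ^ (1/p : ℝ) = x := by
      rw [one_div, Real.rpow_rpow_inv hx hp0.ne']
    rw [e1, e2] at h
    have e3 : min (1/p) (1 - 1/p) = min 1 (p-1) / p := by
      rw [eq_comm, div_eq_iff hp0.ne', min_mul_of_nonneg _ _ hp0.le]
      congr 1 <;> field_simp
    rw [e3] at h
    have h2 := mul_le_mul_of_nonneg_left h hp0.le
    have e4 : p * (min 1 (p-1) / p * (x ^ (p/2) - 1)^2) = min 1 (p-1) * (x ^ (p/2) - 1)^2 := by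
      field_simp
    have e5 : p * (1/p * x ^ p + (1 - 1/p) - x) = x ^ p - 1 - p * (x - 1) := by
      field_simp; ring
    rw [e4, e5] at h2
    exact h2
  refine ⟨min 1 (p - 1), lt_min one_pos (by linarith), H1, ?_⟩
  intro f f' hf hf'
  have hx : 0 ≤ f' / f := div_nonneg hf' hf.le
  have h := H1 (f' / f) hx
  have hfp : (0:ℝ) < f ^ p := Real.rpow_pos_of_pos hf p
  have hb : (0:ℝ) < f ^ (p/2) := Real.rpow_pos_of_pos hf _
  have hr : (0:ℝ) < f ^ (p-1) := Real.rpow_pos_of_pos hf _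
  have hB : f ^ (p/2) * f ^ (p/2) = f ^ p := by
    rw [← Real.rpow_add hf]; congr 1; ring
  have hR : f ^ (p-1) * f = f ^ p := by
    rw [← Real.rpow_add_one hf.ne']; congr 1; ring
  have d1 : (f'/f) ^ p = f' ^ p / f ^ p := Real.div_rpow hf' hf.le _
  have d2 : (f'/f) ^ (p/2) = f' ^ (p/2) / f ^ (p/2) := Real.div_rpow hf' hf.le _
  rw [d1, d2] at h
  have h2 := mul_le_mul_of_nonneg_right h hfp.le
  have e4 : min 1 (p-1) * (f' ^ (p/2) / f ^ (p/2) - 1) ^ 2 * f ^ p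
      = min 1 (p-1) * (f' ^ (p/2) - f ^ (p/2)) ^ 2 := by
    have : (f' ^ (p/2) / f ^ (p/2) - 1) * f ^ (p/2) = f' ^ (p/2) - f ^ (p/2) := by
      rw [sub_mul, div_mul_cancel₀ _ hb.ne', one_mul]
    calc min 1 (p-1) * (f' ^ (p/2) / f ^ (p/2) - 1) ^ 2 * f ^ p
        = min 1 (p-1) * ((f' ^ (p/2) / f ^ (p/2) - 1) * f ^ (p/2)) ^ 2 := by
          rw [← hB]; ring
      _ = min 1 (p-1) * (f' ^ (p/2) - f ^ (p/2)) ^ 2 := by rw [this]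
  have e5 : (f' ^ p / f ^ p - 1 - p * (f' / f - 1)) * f ^ p
      = f' ^ p - f ^ p - p * f ^ (p-1) * (f' - f) := by
    rw [← hR]; field_simp
  rw [e4, e5] at h2
  exact h2
end
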